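/- A subset Y of an unbounded metric space X is small if and only if Y is not prethick. -/

import Mathlib

open Metric Bornology Set

variable {X : Type*} [MetricSpace X]

/-- `B(A,r) = ⋃_{a∈A} B(a,r)` where `B(a,r)` is the closed ball of radius `r`. -/
def ballU (A : Set X) (r : ℝ) : Set X := ⋃ a ∈ A, Metric.closedBall a r

/-- `X^#`: the set of ultrafilters on `X` all of whose members are unbounded. -/
def sharp (X : Type*) [MetricSpace X] : Set (Ultrafilter X) :=
  {p | ∀ P ∈ p, ¬ Bornology.IsBounded P}

/-- Parallelity: `p ∥ q` iff there is `r ≥ 0` with `B(Q,r) ∈ p` for every `Q ∈ q`. -/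
def Par (p q : Ultrafilter X) : Prop :=
  ∃ r : ℝ, 0 ≤ r ∧ ∀ Q ∈ q, ballU Q r ∈ p

/-- `p̆ = {q ∈ X^# : q ∥ p}`. -/
def pbreve (p : Ultrafilter X) : Set (Ultrafilter X) :=
  {q | q ∈ sharp X ∧ Par q p}

/-- The `p`-companion `Δ_p(Y) = {q ∈ X^# : Y ∈ q, q ∥ p}`. -/
def Delta (p : Ultrafilter X) (Y : Set X) : Set (Ultrafilter X) :=
  {q | q ∈ sharp X ∧ Y ∈ q ∧ Par q p}

/-- A set `S ⊆ X^#` is invariant if `p ∈ S`, `q ∈ X^#`, `q ∥ p` imply `q ∈ S`. -/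
def Invt (S : Set (Ultrafilter X)) : Prop :=
  ∀ p ∈ S, ∀ q, q ∈ sharp X → Par q p → q ∈ S

/-- `Y` is large if `X = B(Y,r)` for some `r ≥ 0`. -/
def Large (Y : Set X) : Prop := ∃ r : ℝ, 0 ≤ r ∧ ballU Y r = Set.univ

/-- `Y` is thick if for every `r ≥ 0` there is `y ∈ Y` with `B(y,r) ⊆ Y`. -/
def Thick (Y : Set X) : Prop := ∀ r : ℝ, 0 ≤ r → ∃ y ∈ Y, Metric.closedBall y r ⊆ Y

/-- `Y` is prethick if `B(Y,r)` is thick for some `r ≥ 0`. -/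
def Prethick (Y : Set X) : Prop := ∃ r : ℝ, 0 ≤ r ∧ Thick (ballU Y r)

/-- `Y` is small if `(X∖Y) ∩ L` is large for every large `L`. -/
def SmallSet (Y : Set X) : Prop := ∀ L : Set X, Large L → Large (Yᶜ ∩ L)

/-- `Y` is thin if for each `r ≥ 0` there is a bounded `V` with
`B(y,r) ∩ Y = {y}` for all `y ∈ Y∖V`. -/
def Thin (Y : Set X) : Prop :=
  ∀ r : ℝ, 0 ≤ r → ∃ V : Set X, Bornology.IsBounded V ∧
    ∀ y ∈ Y \ V, Metric.closedBall y r ∩ Y = {y}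

/-- `Y` is `n`-thin if for each `r ≥ 0` there is a bounded `V` with
`|B(y,r) ∩ Y| ≤ n` for all `y ∈ Y∖V`. -/
def NThin (n : ℕ) (Y : Set X) : Prop :=
  ∀ r : ℝ, 0 ≤ r → ∃ V : Set X, Bornology.IsBounded V ∧
    ∀ y ∈ Y \ V, (Metric.closedBall y r ∩ Y).encard ≤ n

/-- `M` is a minimal nonempty closed invariant subset of `X^#`
(closures/closedness taken in the Stone topology on ultrafilters). -/
def MinCI (M : Set (Ultrafilter X)) : Prop :=
  M ⊆ sharp X ∧ M.Nonempty ∧ IsClosed M ∧ Invt M ∧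
    ∀ S ⊆ M, S.Nonempty → IsClosed S → Invt S → S = M


/-! A set `Z` fails to be thick exactly when its complement is large. So `Y` is not prethick
iff every `B(Y,r)ᶜ` is large. If so, and `X = B(L,t)`, then `B(Y,t)ᶜ ⊆ B(Yᶜ ∩ L, t)`, so `Yᶜ ∩ L`
is large. Conversely, if `Y` is small, the large set `B(Y,r)ᶜ ∪ Y` meets `Yᶜ` in `B(Y,r)ᶜ`,
which is therefore large, so `B(Y,r)` is not thick. -/

lemma mem_ballU {A : Set X} {r : ℝ} {x : X} : x ∈ ballU A r ↔ ∃ a ∈ A, dist x a ≤ r := by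
  simp [ballU]

lemma subset_ballU {A : Set X} {r : ℝ} (hr : 0 ≤ r) : A ⊆ ballU A r :=
  fun a ha => mem_ballU.mpr ⟨a, ha, by simpa using hr⟩

lemma ballU_mono {A B : Set X} (h : A ⊆ B) (r : ℝ) : ballU A r ⊆ ballU B r :=
  biUnion_subset_biUnion_left h

lemma ballU_ballU_subset (A : Set X) (r s : ℝ) : ballU (ballU A r) s ⊆ ballU A (r + s) := by
  intro x hx
  obtain ⟨b, hb, hxb⟩ := mem_ballU.mp hx
  obtain ⟨a, ha, hba⟩ := mem_ballU.mp hb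
  exact mem_ballU.mpr ⟨a, ha, by linarith [dist_triangle x b a]⟩

lemma Large.of_subset_ballU {A B : Set X} {t : ℝ} (hA : Large A) (ht : 0 ≤ t)
    (hAB : A ⊆ ballU B t) : Large B := by
  obtain ⟨s, hs, hAs⟩ := hA
  refine ⟨t + s, by linarith, eq_univ_of_univ_subset ?_⟩
  calc univ = ballU A s := hAs.symm
    _ ⊆ ballU (ballU B t) s := ballU_mono hAB s
    _ ⊆ ballU B (t + s) := ballU_ballU_subset B t s

theorem large_compl_iff_not_thick (Z : Set X) : Large Zᶜ ↔ ¬ Thick Z := by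
  simp only [Large, Thick, not_forall, not_exists, not_and, exists_prop]
  refine exists_congr fun s => and_congr_right fun hs => ⟨fun h y hy hball => ?_, fun h => ?_⟩
  · obtain ⟨w, hw, hyw⟩ := mem_ballU.mp (h ▸ mem_univ y)
    exact hw (hball (mem_closedBall.mpr (dist_comm w y ▸ hyw)))
  · refine eq_univ_of_forall fun x => ?_
    by_cases hx : x ∈ Z
    · obtain ⟨w, hwx, hw⟩ := not_subset.mp (h x hx)
      exact mem_ballU.mpr ⟨w, hw, by simpa [dist_comm] using mem_closedBall.mp hwx⟩
    · exact subset_ballU hs hx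

lemma large_compl_ballU_union {Y : Set X} {r : ℝ} (hr : 0 ≤ r) : Large ((ballU Y r)ᶜ ∪ Y) := by
  refine ⟨r, hr, eq_univ_of_forall fun x => ?_⟩
  by_cases hx : x ∈ ballU Y r
  · exact ballU_mono subset_union_right r hx
  · exact subset_ballU hr (Or.inl hx)

lemma compl_ballU_subset_ballU_compl_inter {Y L : Set X} {t : ℝ} (hL : ballU L t = univ) :
    (ballU Y t)ᶜ ⊆ ballU (Yᶜ ∩ L) t := by
  intro z hz
  obtain ⟨w, hw, hzw⟩ := mem_ballU.mp (hL ▸ mem_univ z)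
  exact mem_ballU.mpr ⟨w, ⟨fun hwY => hz (mem_ballU.mpr ⟨w, hwY, hzw⟩), hw⟩, hzw⟩

lemma compl_inter_compl_ballU_union {Y : Set X} {r : ℝ} (hr : 0 ≤ r) :
    Yᶜ ∩ ((ballU Y r)ᶜ ∪ Y) = (ballU Y r)ᶜ := by
  rw [inter_union_distrib_left, compl_inter_self, union_empty,
    inter_eq_right.mpr (compl_subset_compl.mpr (subset_ballU hr))]

theorem stmt11_general (Y : Set X) :
    SmallSet Y ↔ ¬ Prethick Y := by
  constructor
  · rintro hSmall ⟨r, hr, hThick⟩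
    have hLarge : Large (ballU Y r)ᶜ :=
      compl_inter_compl_ballU_union (Y := Y) hr ▸ hSmall _ (large_compl_ballU_union hr)
    exact (large_compl_iff_not_thick _).mp hLarge hThick
  · rintro hNotPrethick L ⟨t, ht, hLt⟩
    have hLarge : Large (ballU Y t)ᶜ :=
      (large_compl_iff_not_thick _).mpr fun hThick => hNotPrethick ⟨t, ht, hThick⟩
    exact hLarge.of_subset_ballU ht (compl_ballU_subset_ballU_compl_inter hLt)

theorem stmt11 (hX : ¬ Bornology.IsBounded (Set.univ : Set X)) (Y : Set X) :
    SmallSet Y ↔ ¬ Prethick Y :=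
  stmt11_general Y
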